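/- Let G be a finite connected simple graph on n ≥ 1 vertices with diameter D, and let k ≥ 1 be an integer. Then T_k(G) ≤ min{D, ⌈√k⌉}; in particular T_k(G) ≤ ⌈√k⌉. -/

import Mathlib

open SimpleGraph

/-- The ball of radius `t` around `v`: all vertices at hop distance at most `t` from `v`. -/
def SimpleGraph.hopBall {V : Type*} (G : SimpleGraph V) (v : V) (t : ℕ) : Set V :=
  {w | G.dist v w ≤ t}

/-- The broadcast quality of a vertex `v`:
`T_k(v) = min ({t : t ≥ 1 and t·|B_t(v)| ≥ k} ∪ {D})` where `D` is the diameter. -/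
noncomputable def SimpleGraph.broadcastQuality {V : Type*} (G : SimpleGraph V) (k : ℕ)
    (v : V) : ℕ :=
  sInf ({t : ℕ | 1 ≤ t ∧ k ≤ t * (G.hopBall v t).ncard} ∪ {G.diam})

/-- The broadcast quality of the graph: `T_k(G) = max_v T_k(v)`. -/
noncomputable def SimpleGraph.broadcastQualityGraph {V : Type*} [Fintype V]
    (G : SimpleGraph V) (k : ℕ) : ℕ :=
  Finset.univ.sup (fun v => G.broadcastQuality k v)

/-!
On a shortest path from `v` to a vertex at distance at least `t`, the first `t + 1` vertices are
distinct and lie in `B_t(v)`; if no such vertex exists, `B_t(v)` is the whole vertex set, which is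
at least as large as a ball of radius `t ≤ D` around an end of a diametral pair. Hence
`|B_t(v)| ≥ t + 1` whenever `t ≤ D`, and for `t = ⌈√k⌉ ≤ D` this gives `t·|B_t(v)| ≥ t² ≥ k`.
-/

namespace SimpleGraph

variable {V : Type*} {G : SimpleGraph V}

lemma Walk.dist_getVert_le {u w : V} (p : G.Walk u w) (i : ℕ) : G.dist u (p.getVert i) ≤ i :=
  calc G.dist u (p.getVert i) ≤ (p.take i).length := G.dist_le _
    _ ≤ i := by rw [Walk.take_length]; exact min_le_left _ _

lemma Reachable.add_one_le_ncard_hopBall [Finite V] {v w : V} (hr : G.Reachable v w) {t : ℕ}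
    (ht : t ≤ G.dist v w) : t + 1 ≤ (G.hopBall v t).ncard := by
  classical
  obtain ⟨p, hp, hlen⟩ := hr.exists_path_of_dist
  have hle {i : ℕ} (hi : i ∈ Finset.range (t + 1)) : i ≤ t :=
    Nat.lt_succ_iff.mp (Finset.mem_range.mp hi)
  have hinj : Set.InjOn p.getVert (Finset.range (t + 1)) := fun i hi j hj =>
    hp.getVert_injOn ((hle hi).trans (ht.trans hlen.ge)) ((hle hj).trans (ht.trans hlen.ge))
  have hsub : ((Finset.range (t + 1)).image p.getVert : Set V) ⊆ G.hopBall v t := by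
    intro x hx
    obtain ⟨i, hi, rfl⟩ := Finset.mem_image.mp hx
    exact (p.dist_getVert_le i).trans (hle hi)
  calc t + 1 = ((Finset.range (t + 1)).image p.getVert).card := by
        rw [Finset.card_image_of_injOn hinj, Finset.card_range]
    _ ≤ (G.hopBall v t).ncard := by
        rw [← Set.ncard_coe_finset]; exact Set.ncard_le_ncard hsub

lemma Connected.add_one_le_ncard_hopBall [Finite V] (hconn : G.Connected) (v : V) {t : ℕ}
    (ht : t ≤ G.diam) : t + 1 ≤ (G.hopBall v t).ncard := by
  by_cases hfar : ∃ w, t ≤ G.dist v w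
  · obtain ⟨w, hw⟩ := hfar
    exact (hconn v w).add_one_le_ncard_hopBall hw
  · push Not at hfar
    have hball : G.hopBall v t = Set.univ := Set.eq_univ_of_forall fun w => (hfar w).le
    have : Nonempty V := hconn.nonempty
    obtain ⟨a, b, hab⟩ := G.exists_dist_eq_diam
    calc t + 1 ≤ (G.hopBall a t).ncard := (hconn a b).add_one_le_ncard_hopBall (hab ▸ ht)
      _ ≤ (G.hopBall v t).ncard := hball ▸ Set.ncard_le_ncard (Set.subset_univ _)

lemma broadcastQuality_le_diam (k : ℕ) (v : V) : G.broadcastQuality k v ≤ G.diam :=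
  Nat.sInf_le (Or.inr rfl)

lemma broadcastQuality_le_of_le_mul_ncard {k t : ℕ} {v : V} (ht : 1 ≤ t)
    (hk : k ≤ t * (G.hopBall v t).ncard) : G.broadcastQuality k v ≤ t :=
  Nat.sInf_le (Or.inl ⟨ht, hk⟩)

lemma Connected.broadcastQuality_le_of_le_diam [Finite V] (hconn : G.Connected) {k t : ℕ}
    (v : V) (ht : 1 ≤ t) (htD : t ≤ G.diam) (hk : k ≤ t * t) : G.broadcastQuality k v ≤ t :=
  broadcastQuality_le_of_le_mul_ncard ht <| hk.trans <|
    Nat.mul_le_mul_left t ((Nat.le_succ t).trans (hconn.add_one_le_ncard_hopBall v htD))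

end SimpleGraph

lemma Nat.le_ceil_sqrt_mul_ceil_sqrt (k : ℕ) : k ≤ ⌈Real.sqrt k⌉₊ * ⌈Real.sqrt k⌉₊ := by
  have h : (k : ℝ) ≤ ⌈Real.sqrt k⌉₊ ^ 2 :=
    (Real.sqrt_le_left (Nat.cast_nonneg _)).mp (Nat.le_ceil _)
  rw [← sq]
  exact_mod_cast h

theorem upper_bound_on_Tk_general {V : Type*} [Fintype V] (G : SimpleGraph V)
    (hconn : G.Connected) (k : ℕ) (hk : 1 ≤ k) :
    G.broadcastQualityGraph k ≤ min G.diam ⌈Real.sqrt k⌉₊ := by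
  refine Finset.sup_le fun v _ => le_min (G.broadcastQuality_le_diam k v) ?_
  rcases le_total G.diam ⌈Real.sqrt k⌉₊ with hD | hD
  · exact (G.broadcastQuality_le_diam k v).trans hD
  · have ht : 1 ≤ ⌈Real.sqrt k⌉₊ :=
      Nat.one_le_ceil_iff.mpr (Real.sqrt_pos.mpr (by exact_mod_cast hk))
    exact hconn.broadcastQuality_le_of_le_diam v ht hD (Nat.le_ceil_sqrt_mul_ceil_sqrt k)

theorem upper_bound_on_Tk {V : Type*} [Fintype V] [Nonempty V] (G : SimpleGraph V)
    (hconn : G.Connected) (k : ℕ) (hk : 1 ≤ k) :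
    G.broadcastQualityGraph k ≤ min G.diam ⌈Real.sqrt k⌉₊ :=
  upper_bound_on_Tk_general G hconn k hk
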